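/- For every n ≥ 2 there exist m ≥ n/2 and matrices X, Y ∈ ℝ^{n×m} with orthonormal columns such that ‖X − Y‖_F² ≥ 2m − 2√m while max_{j,k} |⟨X_j, Y_k⟩| = 1/√m. -/

import Mathlib

/-! With `m = 2 ^ ⌊log₂ n⌋ ≥ n / 2`, take `X` to be the first `m` standard basis vectors of `ℝⁿ`
and `Y = X U` with `U` the Sylvester–Hadamard matrix of order `m` scaled by `1 / √m`. Then
`Xᵀ Y = U` has all entries of absolute value `1 / √m`, and since `X`, `Y` have orthonormal
columns, `‖X - Y‖_F² = 2m - 2 tr U ≥ 2m - 2√m`. -/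

open Matrix

namespace Matrix

theorem transpose_mul_self_submatrix_one {m n R : Type*} [Fintype n] [DecidableEq m]
    [DecidableEq n] [NonAssocSemiring R] {f : m → n}
    (hf : Function.Injective f) :
    ((1 : Matrix n n R).submatrix id f)ᵀ * (1 : Matrix n n R).submatrix id f = 1 := by
  rw [transpose_submatrix, transpose_one, ← submatrix_mul _ _ _ _ _ Function.bijective_id,
    mul_one, submatrix_one _ hf]

theorem sum_sum_sub_sq_of_orthonormal {m n : Type*} [Fintype m] [Fintype n] [DecidableEq m]
    {X Y : Matrix n m ℝ} (hX : Xᵀ * X = 1) (hY : Yᵀ * Y = 1) :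
    ∑ i, ∑ j, (X i j - Y i j) ^ 2 = 2 * Fintype.card m - 2 * trace (Xᵀ * Y) := by
  have hsq : ∑ i, ∑ j, (X i j - Y i j) ^ 2 = trace ((X - Y)ᵀ * (X - Y)) := by
    rw [Finset.sum_comm]
    simp [trace, mul_apply, sq]
  have hYX : trace (Yᵀ * X) = trace (Xᵀ * Y) := by
    rw [← trace_transpose, transpose_mul, transpose_transpose]
  rw [hsq, transpose_sub, Matrix.sub_mul, Matrix.mul_sub, Matrix.mul_sub, hX, hY]
  simp only [trace_sub, trace_one, hYX]
  ring

end Matrix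

/-- Entries `(-1) ^ ⟨a, b⟩` for `a, b ∈ 𝔽₂ᵗ`. -/
noncomputable def sylvester (t : ℕ) : Matrix (Fin t → Bool) (Fin t → Bool) ℝ :=
  of fun a b => ∏ k, if a k && b k then -1 else 1

theorem abs_sylvester_apply (t : ℕ) (a b : Fin t → Bool) : |sylvester t a b| = 1 := by
  simp only [sylvester, of_apply, Finset.abs_prod]
  exact Finset.prod_eq_one fun k _ => by split <;> simp

theorem sylvester_transpose (t : ℕ) : (sylvester t)ᵀ = sylvester t := by
  ext a b
  simp only [sylvester, transpose_apply, of_apply, Bool.and_comm]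

theorem sylvester_mul_self (t : ℕ) : sylvester t * sylvester t = (2 ^ t : ℝ) • 1 := by
  ext a c
  have hcoord (x y : Bool) : ∑ z : Bool, (if x && z then (-1 : ℝ) else 1) *
      (if z && y then -1 else 1) = if x = y then 2 else 0 := by
    cases x <;> cases y <;> norm_num
  simp only [mul_apply, sylvester, of_apply, ← Finset.prod_mul_distrib]
  rw [← Fintype.prod_sum (fun k z => (if a k && z then (-1 : ℝ) else 1) *
      (if z && c k then -1 else 1)), Finset.prod_congr rfl fun k _ => hcoord (a k) (c k)]
  simp only [Matrix.smul_apply, one_apply, smul_eq_mul, mul_ite, mul_one, mul_zero]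
  split_ifs with h
  · subst h
    simp
  · obtain ⟨k, hk⟩ := Function.ne_iff.1 h
    exact Finset.prod_eq_zero (Finset.mem_univ k) (if_neg hk)

noncomputable def normalizedSylvester (t : ℕ) : Matrix (Fin (2 ^ t)) (Fin (2 ^ t)) ℝ :=
  (√(2 ^ t))⁻¹ • (sylvester t).submatrix e e
where
  e : Fin (2 ^ t) ≃ (Fin t → Bool) := (Fintype.equivFinOfCardEq (by simp)).symm

theorem normalizedSylvester_transpose_mul_self (t : ℕ) :
    (normalizedSylvester t)ᵀ * normalizedSylvester t = 1 := by
  have hscale : (√(2 ^ t : ℝ))⁻¹ * (√(2 ^ t))⁻¹ * 2 ^ t = 1 := by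
    rw [← mul_inv, Real.mul_self_sqrt (by positivity), inv_mul_cancel₀ (by positivity)]
  rw [normalizedSylvester, transpose_smul, transpose_submatrix, sylvester_transpose,
    smul_mul_smul_comm, submatrix_mul_equiv, sylvester_mul_self, submatrix_smul, Pi.smul_apply,
    Pi.smul_apply, submatrix_one_equiv, smul_smul, hscale, one_smul]

theorem abs_normalizedSylvester_apply (t : ℕ) (j k : Fin (2 ^ t)) :
    |normalizedSylvester t j k| = (√(2 ^ t))⁻¹ := by
  simp [normalizedSylvester, abs_mul, abs_sylvester_apply]

theorem trace_normalizedSylvester_le (t : ℕ) : trace (normalizedSylvester t) ≤ √(2 ^ t) :=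
  calc trace (normalizedSylvester t)
      ≤ ∑ j, |normalizedSylvester t j j| := Finset.sum_le_sum fun j _ => le_abs_self _
    _ = √(2 ^ t) := by
      simp only [abs_normalizedSylvester_apply, Finset.sum_const, Finset.card_univ,
        Fintype.card_fin, nsmul_eq_mul]
      rw [← div_eq_mul_inv, Nat.cast_pow, Nat.cast_ofNat, Real.div_sqrt]

/-- For every `n ≥ 2` there exist `m ≥ n/2` and matrices `X, Y ∈ ℝ^{n×m}` with
orthonormal columns such that `‖X − Y‖_F² ≥ 2m − 2√m` while
`max_{j,k} |⟨X_j, Y_k⟩| = 1/√m`. -/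
theorem exists_distant_orthonormal_small_cos {n : ℕ} (hn : 2 ≤ n) :
    ∃ m : ℕ, (n : ℝ) / 2 ≤ (m : ℝ) ∧
      ∃ X Y : Matrix (Fin n) (Fin m) ℝ,
        Xᵀ * X = 1 ∧ Yᵀ * Y = 1 ∧
        2 * (m : ℝ) - 2 * Real.sqrt m ≤ (∑ i, ∑ j, (X i j - Y i j) ^ 2) ∧
        (⨆ j : Fin m, ⨆ k : Fin m, |∑ i, X i j * Y i k|) = 1 / Real.sqrt m := by
  obtain ⟨t, hmn, hnm⟩ : ∃ t, 2 ^ t ≤ n ∧ n < 2 * 2 ^ t :=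
    ⟨Nat.log 2 n, Nat.pow_log_le_self 2 (by omega),
      by simpa [pow_succ, mul_comm] using Nat.lt_pow_succ_log_self one_lt_two n⟩
  let E : Matrix (Fin n) (Fin (2 ^ t)) ℝ :=
    (1 : Matrix (Fin n) (Fin n) ℝ).submatrix id (Fin.castLE hmn)
  let U := normalizedSylvester t
  have hE : Eᵀ * E = 1 := transpose_mul_self_submatrix_one (Fin.castLE_injective hmn)
  have hEU : Eᵀ * (E * U) = U := by rw [← Matrix.mul_assoc, hE, Matrix.one_mul]
  have hY : (E * U)ᵀ * (E * U) = 1 := by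
    rw [transpose_mul, Matrix.mul_assoc, hEU, normalizedSylvester_transpose_mul_self]
  have hnmR : (n : ℝ) < 2 * 2 ^ t := by exact_mod_cast hnm
  refine ⟨2 ^ t, by push_cast; linarith, E, E * U, hE, hY, ?_, ?_⟩
  · rw [sum_sum_sub_sq_of_orthonormal hE hY, hEU, Fintype.card_fin]
    push_cast
    linarith [trace_normalizedSylvester_le t]
  · change (⨆ j, ⨆ k, |(Eᵀ * (E * U)) j k|) = _
    simp only [hEU, U, abs_normalizedSylvester_apply, ciSup_const]
    push_cast
    rw [one_div]
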